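/- Consider the replicator system dz_i/dτ = Θ₂ z_i (-ν_i + Σ_j ν_j z_j) on the simplex with Θ₂ > 0 and ν_1 < ν_2 ≤ ... ≤ ν_N. Then every solution with z_1(0) > 0 and z_i(0) ≥ 0, Σ z_i(0) = 1 converges to E_1 = (1,0,...,0); i.e., the strain with the smallest clearance rate perturbation (longest duration of carriage) is the unique survivor. -/

import Mathlib

open Filter Finset

/-!
With fitness `aᵢ = -Θ₂ νᵢ` the system is the replicator equation `zᵢ' = zᵢ (aᵢ - Σⱼ aⱼ zⱼ)`:
every `zᵢ(t) exp (-aᵢ t)` evolves by the same scalar factor `exp (-∫ Σⱼ aⱼ zⱼ)`. As the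
simplex is invariant, that factor is fixed by normalisation and the solution is the softmax
`zᵢ(t) = zᵢ(0) exp (aᵢ t) / Σⱼ zⱼ(0) exp (aⱼ t)`, which concentrates on the strict maximiser
of `a`, the strain with the smallest `ν`.
-/

theorem eq_mul_exp_sub_of_hasDerivAt {f g G : ℝ → ℝ}
    (hf : ∀ t, HasDerivAt f (f t * g t) t) (hG : ∀ t, HasDerivAt G (g t) t) (s t : ℝ) :
    f t = f s * Real.exp (G t - G s) := by
  have hconst : ∀ x, HasDerivAt (fun x => f x * Real.exp (-G x)) 0 x := fun x =>
    ((hf x).fun_mul (hG x).fun_neg.exp).congr_deriv (by ring)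
  have hts := is_const_of_deriv_eq_zero (fun x => (hconst x).differentiableAt)
    (fun x => (hconst x).deriv) t s
  calc f t = f t * Real.exp (-G t) * Real.exp (G t) := by
        rw [mul_assoc, ← Real.exp_add, neg_add_cancel, Real.exp_zero, mul_one]
    _ = f s * Real.exp (G t - G s) := by
        rw [hts, mul_assoc, ← Real.exp_add, neg_add_eq_sub]

theorem tendsto_softmax_atTop {ι : Type*} [Fintype ι] [DecidableEq ι] {a c : ι → ℝ} {i₀ : ι}
    (ha : ∀ j, j ≠ i₀ → a j < a i₀) (hc : c i₀ ≠ 0) (i : ι) :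
    Tendsto (fun t => c i * Real.exp (a i * t) / ∑ j, c j * Real.exp (a j * t)) atTop
      (nhds (if i = i₀ then 1 else 0)) := by
  have hlim : ∀ j, Tendsto (fun t => c j * Real.exp ((a j - a i₀) * t)) atTop
      (nhds (if j = i₀ then c i₀ else 0)) := fun j => by
    rcases eq_or_ne j i₀ with rfl | hj
    · simp
    · simpa [hj] using (Real.tendsto_exp_atBot.comp
        (tendsto_id.const_mul_atTop_of_neg (sub_neg.2 (ha j hj)))).const_mul (c j)
  have hsum : Tendsto (fun t => ∑ j, c j * Real.exp ((a j - a i₀) * t)) atTop (nhds (c i₀)) := by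
    simpa using tendsto_finsetSum univ fun j _ => hlim j
  convert (hlim i).div hsum hc using 1
  · ext t
    have hrescale : ∀ j, c j * Real.exp ((a j - a i₀) * t)
        = c j * Real.exp (a j * t) * Real.exp (-(a i₀ * t)) := fun j => by
      rw [mul_assoc, ← Real.exp_add, sub_mul, sub_eq_add_neg]
    simp only [Pi.div_apply, hrescale, ← sum_mul]
    rw [mul_div_mul_right _ _ (Real.exp_ne_zero _)]
  · split_ifs <;> simp [hc]

namespace Replicator

variable {ι : Type*} [Fintype ι]

def IsSolution (a : ι → ℝ) (z : ℝ → ι → ℝ) : Prop :=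
  ∀ t i, HasDerivAt (fun s => z s i) (z t i * (a i - ∑ j, a j * z t j)) t

variable {a : ι → ℝ} {z : ℝ → ι → ℝ}

theorem IsSolution.exists_hasDerivAt_meanFitness (hz : IsSolution a z) :
    ∃ Φ : ℝ → ℝ, ∀ t, HasDerivAt Φ (∑ j, a j * z t j) t := by
  have hcont : Continuous fun t => ∑ j, a j * z t j :=
    continuous_finsetSum _ fun j _ =>
      continuous_const.mul (continuous_iff_continuousAt.2 fun t => (hz t j).continuousAt)
  exact ⟨_, fun t => (hcont.integral_hasStrictDerivAt 0 t).hasDerivAt⟩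

theorem IsSolution.sum_eq_one (hz : IsSolution a z) (h0 : ∑ i, z 0 i = 1) (t : ℝ) :
    ∑ i, z t i = 1 := by
  obtain ⟨Φ, hΦ⟩ := hz.exists_hasDerivAt_meanFitness
  have hσ : ∀ t, HasDerivAt (fun s => ∑ i, z s i - 1)
      ((∑ i, z t i - 1) * -∑ j, a j * z t j) t := fun t =>
    ((HasDerivAt.fun_sum fun i _ => hz t i).sub_const 1).congr_deriv (by
      simp only [mul_sub, sum_sub_distrib, ← sum_mul, mul_comm (z t _) (a _)]
      ring)
  have := eq_mul_exp_sub_of_hasDerivAt hσ (fun t => (hΦ t).neg) 0 t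
  rw [h0, sub_self, zero_mul] at this
  exact sub_eq_zero.1 this

theorem IsSolution.eq_div_sum (hz : IsSolution a z) (h0 : ∑ i, z 0 i = 1) (t : ℝ) (i : ι) :
    z t i = z 0 i * Real.exp (a i * t) / ∑ j, z 0 j * Real.exp (a j * t) := by
  obtain ⟨Φ, hΦ⟩ := hz.exists_hasDerivAt_meanFitness
  have hform : ∀ j, z t j = z 0 j * Real.exp (a j * t) * Real.exp (Φ 0 - Φ t) := fun j => by
    have := eq_mul_exp_sub_of_hasDerivAt (G := fun s => a j * s - Φ s) (hz · j)
      (fun t => (((hasDerivAt_id' t).const_mul (a j)).fun_sub (hΦ t)).congr_deriv (by ring)) 0 t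
    rw [this, mul_assoc, ← Real.exp_add]
    ring_nf
  have hsum := hz.sum_eq_one h0 t
  simp only [hform, ← sum_mul] at hsum
  rw [hform i, eq_div_iff (left_ne_zero_of_mul_eq_one hsum), mul_assoc,
    mul_comm (Real.exp _), hsum, mul_one]

end Replicator

theorem competitive_exclusion_clearance_general
    (N : ℕ) (hN : 1 ≤ N) (Θ₂ : ℝ) (hΘ₂ : 0 < Θ₂) (ν : Fin N → ℝ)
    (hν_bot : ∀ j : Fin N, j ≠ ⟨0, hN⟩ → ν ⟨0, hN⟩ < ν j)
    (E₁ : Fin N → ℝ) (hE₁ : E₁ = fun i => if i = ⟨0, hN⟩ then 1 else 0)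
    (z : ℝ → Fin N → ℝ)
    (hz : ∀ (t : ℝ) (i : Fin N), HasDerivAt (fun s => z s i)
      (Θ₂ * z t i * (-ν i + ∑ j, ν j * z t j)) t)
    (hz0 : (∀ i, 0 ≤ z 0 i) ∧ ∑ i, z 0 i = 1 ∧ 0 < z 0 ⟨0, hN⟩) :
    Tendsto z atTop (nhds E₁) := by
  obtain ⟨-, hsum, hpos⟩ := hz0
  have hrep : Replicator.IsSolution (fun i => -(Θ₂ * ν i)) z := fun t i =>
    (hz t i).congr_deriv (by
      simp only [neg_mul, sum_neg_distrib, mul_assoc, ← mul_sum]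
      ring)
  have hfit : ∀ j, j ≠ ⟨0, hN⟩ → -(Θ₂ * ν j) < -(Θ₂ * ν ⟨0, hN⟩) := fun j hj =>
    neg_lt_neg (mul_lt_mul_of_pos_left (hν_bot j hj) hΘ₂)
  rw [hE₁, tendsto_pi_nhds]
  intro i
  simpa only [← hrep.eq_div_sum hsum] using tendsto_softmax_atTop hfit hpos.ne' i

/-- Competitive exclusion for variation in single-infection
clearance rates only: for `zᵢ' = Θ₂ zᵢ (-νᵢ + Σⱼ νⱼ zⱼ)` on the simplex with
`ν 0 < ν 1 ≤ … ≤ ν (N-1)`, every solution with `z₀(0) > 0` converges to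
`E₁ = (1,0,…,0)`: the strain with smallest clearance perturbation survives. -/
theorem competitive_exclusion_clearance
    (N : ℕ) (hN : 1 ≤ N) (Θ₂ : ℝ) (hΘ₂ : 0 < Θ₂) (ν : Fin N → ℝ)
    (hν_mono : ∀ i j : Fin N, i ≤ j → ν i ≤ ν j)
    (hν_bot : ∀ j : Fin N, j ≠ ⟨0, hN⟩ → ν ⟨0, hN⟩ < ν j)
    (E₁ : Fin N → ℝ) (hE₁ : E₁ = fun i => if i = ⟨0, hN⟩ then 1 else 0)
    (z : ℝ → Fin N → ℝ)
    (hz : ∀ (t : ℝ) (i : Fin N), HasDerivAt (fun s => z s i)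
      (Θ₂ * z t i * (-ν i + ∑ j, ν j * z t j)) t)
    (hz0 : (∀ i, 0 ≤ z 0 i) ∧ ∑ i, z 0 i = 1 ∧ 0 < z 0 ⟨0, hN⟩) :
    Tendsto z atTop (nhds E₁) :=
  competitive_exclusion_clearance_general N hN Θ₂ hΘ₂ ν hν_bot E₁ hE₁ z hz hz0
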